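/- arXiv:2103.07360 — 6 statements merged into one kernel-verified Lean document; each statement's English description precedes it below -/
import Mathlib

section
/- For a finite graph (V,F) with c(F) connected components, the number of ℤ_q-flows on (V,F) equals q^{|F| - |V| + c(F)}. -/
open Finset

noncomputable section

attribute [local instance] Classical.propDecidable

/-- A finite multigraph with a fixed orientation: each edge has a source and a target. -/
structure Multigraph (V E : Type) where
  src : E → V
  tgt : E → V

namespace Multigraph

variable {V E : Type} [Fintype V] [Fintype E] [DecidableEq V] [DecidableEq E]

/-- A `ℤ_q`-flow: conservation at every vertex. -/
def IsFlow (G : Multigraph V E) (q : ℕ) (f : E → ZMod q) : Prop :=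
  ∀ v : V, ∑ e ∈ univ.filter (fun e => G.tgt e = v), f e =
           ∑ e ∈ univ.filter (fun e => G.src e = v), f e

/-- A `ℤ`-flow: conservation at every vertex. -/
def IsZFlow (G : Multigraph V E) (f : E → ℤ) : Prop :=
  ∀ v : V, ∑ e ∈ univ.filter (fun e => G.tgt e = v), f e =
           ∑ e ∈ univ.filter (fun e => G.src e = v), f e

/-- The support of a flow: the set of edges with nonzero value. -/
def flowSupport {q : ℕ} (f : E → ZMod q) : Finset E :=
  univ.filter (fun e => f e ≠ 0)

/-- Flow partition function (complex variable). -/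
def Zflow (G : Multigraph V E) (q : ℕ) [NeZero q] (x : ℂ) : ℂ :=
  ∑ f ∈ univ.filter (fun f : E → ZMod q => G.IsFlow q f), x ^ (flowSupport f).card

/-- Flow partition function (real variable). -/
def ZflowR (G : Multigraph V E) (q : ℕ) [NeZero q] (x : ℝ) : ℝ :=
  ∑ f ∈ univ.filter (fun f : E → ZMod q => G.IsFlow q f), x ^ (flowSupport f).card

/-- Potts partition function: sum over colourings of `w ^ (number of monochromatic edges)`. -/
def ZPotts (G : Multigraph V E) (q : ℕ) (w : ℂ) : ℂ :=
  ∑ σ : V → Fin q, w ^ (univ.filter (fun e => σ (G.src e) = σ (G.tgt e))).card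

/-- The simple graph on `V` induced by the edges in `F` (loops/multiplicities dropped;
this does not change connected components). -/
def compRel (G : Multigraph V E) (F : Finset E) : SimpleGraph V :=
  SimpleGraph.fromRel (fun v w => ∃ e ∈ F, G.src e = v ∧ G.tgt e = w)

/-- Number of connected components of the spanning subgraph `(V, F)`. -/
def compCount (G : Multigraph V E) (F : Finset E) : ℕ :=
  Nat.card (G.compRel F).ConnectedComponent

/-- Random cluster partition function. -/
def ZRC (G : Multigraph V E) (q : ℕ) (y : ℂ) : ℂ :=
  ∑ F : Finset E, (q : ℂ) ^ (G.compCount F) * y ^ F.card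

/-- The spanning subgraph `(V, A)`. -/
def edgeSubgraph (G : Multigraph V E) (A : Finset E) : Multigraph V {e : E // e ∈ A} :=
  ⟨fun e => G.src e.1, fun e => G.tgt e.1⟩

/-- Deletion of the edge `e`. -/
def deleteEdge (G : Multigraph V E) (e : E) : Multigraph V {e' : E // e' ≠ e} :=
  ⟨fun e' => G.src e'.1, fun e' => G.tgt e'.1⟩

/-- Contraction of the edge `e`: the edge `e` is removed and every endpoint equal to
`G.tgt e` is redirected to `G.src e`, merging the two endpoints of `e`. -/
def contractEdge (G : Multigraph V E) (e : E) : Multigraph V {e' : E // e' ≠ e} :=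
  ⟨fun e' => if G.src e'.1 = G.tgt e then G.src e else G.src e'.1,
   fun e' => if G.tgt e'.1 = G.tgt e then G.src e else G.tgt e'.1⟩

end Multigraph

/-- The `(L+1) × (L+1)` grid graph, with horizontal and vertical edges oriented
in the positive direction. -/
def gridGraph (L : ℕ) :
    Multigraph (Fin (L+1) × Fin (L+1)) ((Fin L × Fin (L+1)) ⊕ (Fin (L+1) × Fin L)) :=
  ⟨Sum.elim (fun p => (p.1.castSucc, p.2)) (fun p => (p.1, p.2.castSucc)),
   Sum.elim (fun p => (p.1.succ, p.2)) (fun p => (p.1, p.2.succ))⟩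

/-!
The boundary map `∂ : (E → M) → (V → M)`, sending an edge weighting to its net inflow at each
vertex, has the flows as its kernel. Its image consists of the vertex weightings whose sum over
every connected component vanishes: it is spanned by the dipoles `δ (tgt e) - δ (src e)`, and
dipoles along edges let us move all the mass of a component onto one representative vertex.
Hence `0 → flows → M^E → M^V → M^{components} → 0` is exact, and counting gives
`|flows| · |M|^|V| = |M|^|E| · |M|^c`.
-/

theorem AddMonoidHom.card_ker_mul_card_eq_of_exact {A B C : Type*} [AddGroup A] [AddGroup B]
    [AddGroup C] {f : A →+ B} {g : B →+ C} (hfg : Function.Exact f g)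
    (hg : Function.Surjective g) :
    Nat.card f.ker * Nat.card B = Nat.card A * Nat.card C := by
  have hA : Nat.card A = Nat.card f.ker * Nat.card g.ker := by
    rw [← f.ker.card_mul_index, AddSubgroup.index_ker, AddMonoidHom.exact_iff.mp hfg]
  have hB : Nat.card B = Nat.card g.ker * Nat.card C := by
    rw [← g.ker.card_mul_index, AddSubgroup.index_ker, AddMonoidHom.range_eq_top.mpr hg,
      AddSubgroup.card_top]
  rw [hA, hB, mul_assoc]

namespace SimpleGraph

variable {V : Type*} {M : Type*} (H : SimpleGraph V)

@[simp]
theorem connectedComponentMk_out (c : H.ConnectedComponent) : H.connectedComponentMk c.out = c :=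
  c.out_eq

variable [DecidableEq V] [AddCommGroup M]

theorem single_sub_single_mem_of_reachable {R : AddSubgroup (V → M)}
    (hR : ∀ ⦃a b⦄, H.Adj a b → ∀ x, Pi.single a x - Pi.single b x ∈ R) {a b : V}
    (hab : H.Reachable a b) (x : M) : Pi.single a x - Pi.single b x ∈ R := by
  obtain ⟨w⟩ := hab
  induction w with
  | nil => simp
  | cons hadj _ ih => simpa using add_mem (hR hadj x) ih

variable [Fintype V]

def componentSum : (V → M) →+ (H.ConnectedComponent → M) where
  toFun g c := ∑ v ∈ univ.filter (fun v => H.connectedComponentMk v = c), g v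
  map_zero' := by ext; simp
  map_add' g g' := by ext; simp [sum_add_distrib]

theorem componentSum_single (v : V) (x : M) :
    H.componentSum (Pi.single v x) = Pi.single (H.connectedComponentMk v) x := by
  ext c
  simp [componentSum, Pi.single_apply, eq_comm]

theorem componentSum_surjective : Function.Surjective (H.componentSum (M := M)) := by
  intro h
  refine ⟨∑ c, Pi.single c.out (h c), ?_⟩
  simp only [map_sum, componentSum_single, connectedComponentMk_out]
  exact univ_sum_single h

theorem sum_single_out_eq_sum_componentSum (g : V → M) :
    (∑ v, Pi.single (H.connectedComponentMk v).out (g v) : V → M) =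
      ∑ c, Pi.single c.out (H.componentSum g c) := by
  rw [← sum_fiberwise univ H.connectedComponentMk]
  refine sum_congr rfl fun c _ => ?_
  rw [sum_congr rfl fun v hv => by rw [(mem_filter.mp hv).2]]
  exact (map_sum (AddMonoidHom.single (fun _ => M) c.out) g _).symm

theorem ker_componentSum_le {R : AddSubgroup (V → M)}
    (hR : ∀ ⦃a b⦄, H.Adj a b → ∀ x, Pi.single a x - Pi.single b x ∈ R) :
    H.componentSum.ker ≤ R := by
  intro g hg
  have hsplit : g = ∑ v, (Pi.single v (g v) - Pi.single (H.connectedComponentMk v).out (g v)) +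
      ∑ c, Pi.single c.out (H.componentSum g c) := by
    rw [sum_sub_distrib, sum_single_out_eq_sum_componentSum, univ_sum_single, sub_add_cancel]
  rw [hsplit, AddMonoidHom.mem_ker.mp hg]
  simp only [Pi.zero_apply, Pi.single_zero, sum_const_zero, add_zero]
  refine sum_mem fun v _ => H.single_sub_single_mem_of_reachable hR ?_ _
  exact ConnectedComponent.exact (connectedComponentMk_out _ _).symm

end SimpleGraph

namespace Multigraph

variable {V E : Type} {M : Type*} (G : Multigraph V E)

theorem reachable_src_tgt {F : Finset E} {e : E} (he : e ∈ F) :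
    (G.compRel F).Reachable (G.src e) (G.tgt e) := by
  by_cases h : G.src e = G.tgt e
  · rw [h]
  · exact (SimpleGraph.fromRel_adj _ _ _).mpr ⟨h, .inl ⟨e, he, rfl, rfl⟩⟩ |>.reachable

variable [Fintype E] [DecidableEq V] [AddCommGroup M]

def boundary : (E → M) →+ (V → M) where
  toFun f v := ∑ e ∈ univ.filter (fun e => G.tgt e = v), f e -
    ∑ e ∈ univ.filter (fun e => G.src e = v), f e
  map_zero' := by ext; simp
  map_add' f f' := by ext; simp only [Pi.add_apply, sum_add_distrib]; abel

theorem mem_ker_boundary_iff_isFlow {q : ℕ} (f : E → ZMod q) :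
    f ∈ G.boundary.ker ↔ G.IsFlow q f := by
  rw [AddMonoidHom.mem_ker, funext_iff]
  exact forall_congr' fun v => sub_eq_zero

theorem boundary_single (e : E) (x : M) :
    G.boundary (Pi.single e x) = Pi.single (G.tgt e) x - Pi.single (G.src e) x := by
  ext v
  simp [boundary, Pi.single_apply, eq_comm]

theorem single_sub_single_mem_range_boundary {a b : V} (h : (G.compRel univ).Adj a b) (x : M) :
    (Pi.single a x - Pi.single b x : V → M) ∈ G.boundary.range := by
  obtain ⟨-, ⟨e, -, rfl, rfl⟩ | ⟨e, -, rfl, rfl⟩⟩ := (SimpleGraph.fromRel_adj _ _ _).mp h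
  · exact ⟨Pi.single e (-x), by rw [boundary_single, Pi.single_neg, Pi.single_neg]; abel⟩
  · exact ⟨Pi.single e x, boundary_single G e x⟩

variable [Fintype V]

theorem componentSum_boundary (f : E → M) :
    (G.compRel univ).componentSum (G.boundary f) = 0 := by
  rw [← univ_sum_single f, map_sum, map_sum]
  refine sum_eq_zero fun e he => ?_
  rw [boundary_single, map_sub, SimpleGraph.componentSum_single, SimpleGraph.componentSum_single,
    SimpleGraph.ConnectedComponent.sound (G.reachable_src_tgt he), sub_self]

theorem exact_boundary_componentSum :
    Function.Exact (G.boundary (M := M)) (G.compRel univ).componentSum :=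
  AddMonoidHom.exact_of_comp_of_mem_range (AddMonoidHom.ext G.componentSum_boundary)
    fun _ hg => (G.compRel univ).ker_componentSum_le
      (fun _ _ h x => G.single_sub_single_mem_range_boundary h x) hg

theorem card_ker_boundary_mul_card_pow :
    Nat.card (G.boundary (M := M)).ker * Nat.card M ^ Fintype.card V =
      Nat.card M ^ (Fintype.card E + G.compCount univ) := by
  have := AddMonoidHom.card_ker_mul_card_eq_of_exact G.exact_boundary_componentSum
    (SimpleGraph.componentSum_surjective (M := M) _)
  simpa only [Nat.card_fun, Nat.card_eq_fintype_card, pow_add, compCount] using this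

end Multigraph

theorem flow_count_general {V E : Type} [Fintype V] [Fintype E] [DecidableEq V]
    (G : Multigraph V E) (q : ℕ) :
    Nat.card {f : E → ZMod q // G.IsFlow q f} * q ^ Fintype.card V =
      q ^ (Fintype.card E + G.compCount Finset.univ) := by
  have hflows :
      Nat.card {f : E → ZMod q // G.IsFlow q f} = Nat.card (G.boundary (M := ZMod q)).ker :=
    Nat.card_congr (Equiv.subtypeEquivRight fun f => (G.mem_ker_boundary_iff_isFlow f).symm)
  simpa only [hflows, Nat.card_zmod] using G.card_ker_boundary_mul_card_pow (M := ZMod q)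

/-- The number of `ℤ_q`-flows on a finite graph `(V,F)` equals `q^(|F| - |V| + c(F))`
(stated multiplicatively to avoid subtraction). -/
theorem flow_count {V E : Type} [Fintype V] [Fintype E] [DecidableEq V] [DecidableEq E]
    (G : Multigraph V E) (q : ℕ) (hq : 0 < q) :
    Nat.card {f : E → ZMod q // G.IsFlow q f} * q ^ Fintype.card V =
      q ^ (Fintype.card E + G.compCount Finset.univ) :=
  flow_count_general G q
end
end

section
/- For any graph G=(V,E), integer q ≥ 1 and x ∈ ℂ \ {1}: q^{|V|} · Z_flow(G; q, x) = (1-x)^{|E|} · Z_Potts(G; q, (1+(q-1)x)/(1-x)). -/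
open Finset

noncomputable section

attribute [local instance] Classical.propDecidable

/-!
The identity is a discrete Fourier transform over `ℤ_q`. For a primitive additive character `ψ`
of `ℤ_q`, orthogonality gives `∑_σ ψ(⟨f, δσ⟩) = q^|V| · [f is a flow]`, because `⟨f, δσ⟩ = ⟨σ, ∂f⟩`
with `δ` the coboundary and `∂` the divergence. Inserting this into `Z_flow` and exchanging the
sums, the sum over `f` factorizes over the edges: an edge contributes `1 + (q - 1) x` when `σ` is
constant on it and `1 - x` otherwise, i.e. `(1 - x)` times its Potts weight.
-/
lemma AddChar.map_sum_eq_prod {A M ι : Type*} [AddCommMonoid A] [CommMonoid M]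
    (ψ : AddChar A M) (s : Finset ι) (g : ι → A) :
    ψ (∑ i ∈ s, g i) = ∏ i ∈ s, ψ (g i) := by
  induction s using Finset.cons_induction with
  | empty => simp
  | cons a s ha ih => rw [sum_cons, prod_cons, ψ.map_add_eq_mul, ih]

section Fourier

variable {R K ι : Type*} [CommRing R] [Fintype R] [DecidableEq R] [CommRing K] [IsDomain K]
  [Fintype ι] [DecidableEq ι] {ψ : AddChar R K}

theorem AddChar.sum_pi_map_sum_mul (hψ : ψ.IsPrimitive) (c : ι → R) :
    ∑ σ : ι → R, ψ (∑ i, σ i * c i) =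
      if ∀ i, c i = 0 then (Fintype.card R : K) ^ Fintype.card ι else 0 := by
  calc ∑ σ : ι → R, ψ (∑ i, σ i * c i)
      = ∏ i, ∑ a : R, ψ (a * c i) := by
        simp only [ψ.map_sum_eq_prod, Fintype.prod_sum]
    _ = ∏ i, if c i = 0 then (Fintype.card R : K) else 0 := by
        simp only [AddChar.sum_mulShift _ hψ, Nat.cast_ite, Nat.cast_zero]
    _ = _ := by rw [Fintype.prod_ite_zero, prod_const, card_univ]

theorem AddChar.sum_ite_mul_map_mul (hψ : ψ.IsPrimitive) (x : K) (c : R) :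
    ∑ a : R, (if a = 0 then 1 else x) * ψ (a * c) =
      if c = 0 then 1 + ((Fintype.card R : K) - 1) * x else 1 - x := by
  have hsplit : ∀ a : R, (if a = 0 then 1 else x) * ψ (a * c) =
      x * ψ (a * c) + if a = 0 then 1 - x else 0 := by
    intro a
    split_ifs with ha <;> simp [ha]
  simp only [hsplit, sum_add_distrib, ← mul_sum, AddChar.sum_mulShift _ hψ, sum_ite_eq',
    mem_univ, if_true]
  split_ifs <;> ring

theorem AddChar.sum_pow_card_support_mul_map_sum_mul (hψ : ψ.IsPrimitive) (x : K) (c : ι → R) :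
    ∑ f : ι → R, x ^ #{i | f i ≠ 0} * ψ (∑ i, f i * c i) =
      ∏ i, if c i = 0 then 1 + ((Fintype.card R : K) - 1) * x else 1 - x := by
  have hpow : ∀ f : ι → R, x ^ #{i | f i ≠ 0} = ∏ i, if f i = 0 then 1 else x := by
    intro f
    rw [prod_ite, prod_const_one, one_mul, prod_const]
  simp only [hpow, ψ.map_sum_eq_prod, ← prod_mul_distrib, ← AddChar.sum_ite_mul_map_mul hψ,
    Fintype.prod_sum]

end Fourier

namespace Multigraph

variable {V E : Type}

def coboundary {R : Type*} [AddCommGroup R] (G : Multigraph V E) (σ : V → R) (e : E) : R :=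
  σ (G.tgt e) - σ (G.src e)

def divergence [Fintype E] [DecidableEq V] {R : Type*} [AddCommGroup R] (G : Multigraph V E)
    (f : E → R) (v : V) : R :=
  ∑ e ∈ univ.filter (fun e => G.tgt e = v), f e - ∑ e ∈ univ.filter (fun e => G.src e = v), f e

theorem coboundary_eq_zero_iff {R : Type*} [AddCommGroup R] (G : Multigraph V E) (σ : V → R)
    (e : E) : G.coboundary σ e = 0 ↔ σ (G.src e) = σ (G.tgt e) := by
  rw [coboundary, sub_eq_zero, eq_comm]

theorem isFlow_iff_divergence_eq_zero [Fintype E] [DecidableEq V] (G : Multigraph V E) (q : ℕ)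
    (f : E → ZMod q) : G.IsFlow q f ↔ ∀ v, G.divergence f v = 0 := by
  simp only [IsFlow, divergence, sub_eq_zero]

theorem sum_mul_coboundary [Fintype V] [Fintype E] [DecidableEq V] {R : Type*} [CommRing R]
    (G : Multigraph V E) (f : E → R) (σ : V → R) :
    ∑ e, f e * G.coboundary σ e = ∑ v, σ v * G.divergence f v := by
  have hfiber : ∀ t : E → V, ∑ e, f e * σ (t e) = ∑ v, σ v * ∑ e ∈ univ.filter (t · = v), f e := by
    intro t
    rw [← sum_fiberwise univ t]
    refine sum_congr rfl fun v _ => ?_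
    rw [mul_sum]
    refine sum_congr rfl fun e he => ?_
    rw [(mem_filter.mp he).2, mul_comm]
  simp only [coboundary, divergence, mul_sub, sum_sub_distrib, hfiber]

theorem pow_card_mul_Zflow [Fintype V] [Fintype E] [DecidableEq V] [DecidableEq E]
    (G : Multigraph V E) (q : ℕ) [NeZero q] (x : ℂ) :
    (q : ℂ) ^ Fintype.card V * G.Zflow q x =
      ∑ σ : V → ZMod q,
        ∏ e, if σ (G.src e) = σ (G.tgt e) then 1 + ((q : ℂ) - 1) * x else 1 - x := by
  obtain ⟨ψ, hψ⟩ : ∃ ψ : AddChar (ZMod q) ℂ, ψ.IsPrimitive :=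
    ⟨_, AddChar.zmodChar_primitive_of_primitive_root q
      (Complex.isPrimitiveRoot_exp q (NeZero.ne q))⟩
  have hindicator : ∀ f : E → ZMod q, (if G.IsFlow q f then (q : ℂ) ^ Fintype.card V else 0) =
      ∑ σ : V → ZMod q, ψ (∑ e, f e * G.coboundary σ e) := by
    intro f
    simp only [sum_mul_coboundary, AddChar.sum_pi_map_sum_mul hψ, ZMod.card,
      isFlow_iff_divergence_eq_zero]
  calc (q : ℂ) ^ Fintype.card V * G.Zflow q x
      = ∑ f : E → ZMod q, x ^ (flowSupport f).card *
          ∑ σ : V → ZMod q, ψ (∑ e, f e * G.coboundary σ e) := by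
        simp only [Zflow, mul_sum, sum_filter, ← hindicator, mul_ite, mul_zero, mul_comm]
    _ = ∑ σ : V → ZMod q, ∑ f : E → ZMod q,
          x ^ #{e | f e ≠ 0} * ψ (∑ e, f e * G.coboundary σ e) := by
        simp only [mul_sum]
        exact sum_comm
    _ = _ := by
        simp only [AddChar.sum_pow_card_support_mul_map_sum_mul hψ, ZMod.card,
          coboundary_eq_zero_iff]

theorem ZPotts_eq_sum_of_card_eq [Fintype V] [Fintype E] [DecidableEq V] (G : Multigraph V E)
    (q : ℕ) (w : ℂ) {C : Type*} [Fintype C] [DecidableEq C] (hC : Fintype.card C = q) :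
    G.ZPotts q w = ∑ σ : V → C, w ^ #{e | σ (G.src e) = σ (G.tgt e)} := by
  let ρ : Fin q ≃ C := (Fintype.equivFinOfCardEq hC).symm
  refine Fintype.sum_equiv (Equiv.piCongrRight fun _ => ρ) _ _ fun σ => ?_
  simp [Equiv.piCongrRight]

theorem pow_card_mul_ZPotts_div [Fintype V] [Fintype E] [DecidableEq V] (G : Multigraph V E)
    (q : ℕ) {a b : ℂ} (hb : b ≠ 0) {C : Type*} [Fintype C] [DecidableEq C]
    (hC : Fintype.card C = q) :
    b ^ Fintype.card E * G.ZPotts q (a / b) =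
      ∑ σ : V → C, ∏ e, if σ (G.src e) = σ (G.tgt e) then a else b := by
  rw [G.ZPotts_eq_sum_of_card_eq q _ hC, mul_sum]
  refine sum_congr rfl fun σ _ => ?_
  rw [prod_ite, prod_const, prod_const, ← card_univ,
    ← card_filter_add_card_filter_not (s := univ) (fun e => σ (G.src e) = σ (G.tgt e)), pow_add,
    div_pow]
  field_simp

end Multigraph

theorem flow_eq_potts {V E : Type} [Fintype V] [Fintype E] [DecidableEq V] [DecidableEq E]
    (G : Multigraph V E) (q : ℕ) [NeZero q] (x : ℂ) (hx : x ≠ 1) :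
    (q : ℂ) ^ Fintype.card V * G.Zflow q x =
      (1 - x) ^ Fintype.card E * G.ZPotts q ((1 + ((q : ℂ) - 1) * x) / (1 - x)) := by
  rw [G.pow_card_mul_Zflow, G.pow_card_mul_ZPotts_div q (sub_ne_zero.mpr hx.symm) (ZMod.card q)]
end
end

section
/- For any graph G=(V,E), integer q ≥ 1 and x ∈ ℂ \ {1}: q^{|V|} · Z_flow(G; q, x) = (1-x)^{|E|} · Z_RC(G; q, qx/(1-x)). -/
open Finset

noncomputable section

attribute [local instance] Classical.propDecidable

section AuxFlowRC

lemma aux_addChar_sum {ι A : Type*} [AddCommGroup A] (ψ : AddChar A ℂ) (s : Finset ι) (g : ι → A) :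
    ψ (∑ e ∈ s, g e) = ∏ e ∈ s, ψ (g e) := by
  induction s using Finset.cons_induction with
  | empty => simp
  | cons a s ha ih => rw [Finset.sum_cons, Finset.prod_cons, AddChar.map_add_eq_mul, ih]

lemma aux_char_sum (q : ℕ) [NeZero q] (d : ZMod q) :
    ∑ s : ZMod q, ZMod.stdAddChar (s * d) = if d = 0 then (q : ℂ) else 0 := by
  have h : ∑ s : ZMod q, ZMod.stdAddChar (s * d)
      = ∑ s, (ZMod.stdAddChar.mulShift d) s := by
    simp [AddChar.mulShift_apply, mul_comm]
  rw [h, AddChar.sum_eq_ite]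
  by_cases hd : d = 0
  · simp [hd, AddChar.mulShift_zero, ← AddChar.one_eq_zero, ZMod.card]
  · have h1 : ZMod.stdAddChar.mulShift d ≠ 1 := ZMod.isPrimitive_stdAddChar q hd
    rw [AddChar.one_eq_zero] at h1
    simp [h1, hd]

variable {V E : Type} [Fintype V] [Fintype E] [DecidableEq V] [DecidableEq E]

lemma aux_regroup (G : Multigraph V E) (q : ℕ) [NeZero q] (σ : V → ZMod q) (f : E → ZMod q) :
    ∏ e : E, ZMod.stdAddChar ((σ (G.tgt e) - σ (G.src e)) * f e)
      = ∏ v : V, ZMod.stdAddChar (σ v *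
          ((∑ e ∈ univ.filter (fun e => G.tgt e = v), f e)
            - ∑ e ∈ univ.filter (fun e => G.src e = v), f e)) := by
  calc ∏ e : E, ZMod.stdAddChar ((σ (G.tgt e) - σ (G.src e)) * f e)
      = (∏ e : E, ZMod.stdAddChar (σ (G.tgt e) * f e))
        * ∏ e : E, ZMod.stdAddChar (-(σ (G.src e) * f e)) := by
        rw [← Finset.prod_mul_distrib]
        refine prod_congr rfl fun e _ => ?_
        rw [← AddChar.map_add_eq_mul]
        congr 1; ring
    _ = (∏ v : V, ZMod.stdAddChar (σ v * ∑ e ∈ univ.filter (fun e => G.tgt e = v), f e))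
        * ∏ v : V, ZMod.stdAddChar (-(σ v * ∑ e ∈ univ.filter (fun e => G.src e = v), f e)) := by
        congr 1
        · rw [← Finset.prod_fiberwise univ G.tgt (fun e => ZMod.stdAddChar (σ (G.tgt e) * f e))]
          refine prod_congr rfl fun v _ => ?_
          rw [Finset.mul_sum, aux_addChar_sum]
          refine prod_congr rfl fun e he => ?_
          rw [(mem_filter.1 he).2]
        · rw [← Finset.prod_fiberwise univ G.src (fun e => ZMod.stdAddChar (-(σ (G.src e) * f e)))]
          refine prod_congr rfl fun v _ => ?_
          rw [Finset.mul_sum, ← Finset.sum_neg_distrib, aux_addChar_sum]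
          refine prod_congr rfl fun e he => ?_
          rw [(mem_filter.1 he).2]
    _ = _ := by
        rw [← Finset.prod_mul_distrib]
        refine prod_congr rfl fun v _ => ?_
        rw [← AddChar.map_add_eq_mul]
        congr 1; ring

lemma aux_indicator (G : Multigraph V E) (q : ℕ) [NeZero q] (f : E → ZMod q) :
    ∑ σ : V → ZMod q, ∏ e : E, ZMod.stdAddChar ((σ (G.tgt e) - σ (G.src e)) * f e)
      = if G.IsFlow q f then (q : ℂ) ^ Fintype.card V else 0 := by
  rw [Finset.sum_congr rfl fun σ _ => aux_regroup G q σ f,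
    ← Fintype.prod_sum (f := fun (v : V) (s : ZMod q) => ZMod.stdAddChar (s *
      ((∑ e ∈ univ.filter (fun e => G.tgt e = v), f e)
        - ∑ e ∈ univ.filter (fun e => G.src e = v), f e)))]
  have hv : ∀ v : V, (∑ s : ZMod q, ZMod.stdAddChar (s *
      ((∑ e ∈ univ.filter (fun e => G.tgt e = v), f e)
        - ∑ e ∈ univ.filter (fun e => G.src e = v), f e)))
      = if (∑ e ∈ univ.filter (fun e => G.tgt e = v), f e)
          = ∑ e ∈ univ.filter (fun e => G.src e = v), f e then (q : ℂ) else 0 := by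
    intro v
    rw [aux_char_sum]; exact if_congr sub_eq_zero rfl rfl
  rw [Finset.prod_congr rfl fun v _ => hv v]
  by_cases hf : G.IsFlow q f
  · rw [if_pos hf, Finset.prod_congr rfl fun v _ => if_pos (hf v)]
    simp [Finset.prod_const, Finset.card_univ]
  · rw [if_neg hf]
    obtain ⟨v, hvne⟩ : ∃ v, ¬ ((∑ e ∈ univ.filter (fun e => G.tgt e = v), f e)
        = ∑ e ∈ univ.filter (fun e => G.src e = v), f e) := by
      by_contra h; push_neg at h; exact hf fun v => h v
    exact Finset.prod_eq_zero (mem_univ v) (if_neg hvne)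

lemma aux_edge_sum (q : ℕ) [NeZero q] (x : ℂ) (d : ZMod q) :
    ∑ a : ZMod q, ZMod.stdAddChar (d * a) * (if a = 0 then 1 else x)
      = if d = 0 then 1 + ((q : ℂ) - 1) * x else 1 - x := by
  have hterm : ∀ a : ZMod q, ZMod.stdAddChar (d * a) * (if a = 0 then 1 else x)
      = x * ZMod.stdAddChar (a * d)
        + (if a = (0 : ZMod q) then (1 - x) * ZMod.stdAddChar (a * d) else 0) := by
    intro a
    rw [mul_comm d a]
    split_ifs <;> ring
  rw [Finset.sum_congr rfl fun a _ => hterm a, Finset.sum_add_distrib, ← Finset.mul_sum,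
    aux_char_sum, Fintype.sum_ite_eq' (0 : ZMod q)
      (fun a => (1 - x) * ZMod.stdAddChar (a * d))]
  simp only [zero_mul, AddChar.map_zero_eq_one, mul_one]
  split_ifs <;> ring

lemma aux_pow_supp (q : ℕ) [NeZero q] (x : ℂ) (f : E → ZMod q) :
    x ^ (Multigraph.flowSupport f).card = ∏ e : E, (if f e = 0 then 1 else x) := by
  rw [Finset.prod_ite (fun _ => (1 : ℂ)) (fun _ => x), Finset.prod_const, Finset.prod_const,
    one_pow, one_mul]
  have h : (univ.filter (fun e => ¬ f e = 0)).card = (Multigraph.flowSupport f).card := by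
    congr 1
  rw [h]

lemma aux_flow_side (G : Multigraph V E) (q : ℕ) [NeZero q] (x : ℂ) :
    (q : ℂ) ^ Fintype.card V * G.Zflow q x
      = ∑ σ : V → ZMod q,
          (1 + ((q : ℂ) - 1) * x) ^ (univ.filter (fun e => σ (G.src e) = σ (G.tgt e))).card
            * (1 - x) ^ (Fintype.card E
                - (univ.filter (fun e => σ (G.src e) = σ (G.tgt e))).card) := by
  rw [Multigraph.Zflow, Finset.mul_sum, Finset.sum_filter]
  have step1 : ∀ f : E → ZMod q,
      (if G.IsFlow q f then (q : ℂ) ^ Fintype.card V * x ^ (Multigraph.flowSupport f).card else 0)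
      = ∑ σ : V → ZMod q, ∏ e : E,
          (ZMod.stdAddChar ((σ (G.tgt e) - σ (G.src e)) * f e) * (if f e = 0 then 1 else x)) := by
    intro f
    have : (if G.IsFlow q f then (q : ℂ) ^ Fintype.card V * x ^ (Multigraph.flowSupport f).card
        else 0)
        = (if G.IsFlow q f then (q : ℂ) ^ Fintype.card V else 0)
            * x ^ (Multigraph.flowSupport f).card := by
      split_ifs <;> ring
    rw [this, ← aux_indicator, Finset.sum_mul]
    refine Finset.sum_congr rfl fun σ _ => ?_
    rw [aux_pow_supp q x f, ← Finset.prod_mul_distrib]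
  rw [Finset.sum_congr rfl fun f _ => step1 f, Finset.sum_comm]
  refine Finset.sum_congr rfl fun σ _ => ?_
  rw [← Fintype.prod_sum (f := fun (e : E) (a : ZMod q) =>
    ZMod.stdAddChar ((σ (G.tgt e) - σ (G.src e)) * a) * (if a = 0 then 1 else x))]
  have hedge : ∀ e : E, (∑ a : ZMod q,
      ZMod.stdAddChar ((σ (G.tgt e) - σ (G.src e)) * a) * (if a = 0 then 1 else x))
      = if σ (G.src e) = σ (G.tgt e) then 1 + ((q : ℂ) - 1) * x else 1 - x := by
    intro e
    rw [aux_edge_sum]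
    exact if_congr (sub_eq_zero.trans eq_comm) rfl rfl
  rw [Finset.prod_congr rfl fun e _ => hedge e,
    Finset.prod_ite (fun _ => 1 + ((q : ℂ) - 1) * x) (fun _ => 1 - x),
    Finset.prod_const, Finset.prod_const]
  congr 2
  have := Finset.card_filter_add_card_filter_not
    (s := (univ : Finset E)) (p := fun e => σ (G.src e) = σ (G.tgt e))
  rw [Finset.card_univ] at this
  omega

lemma aux_comp_card (G : Multigraph V E) (q : ℕ) [NeZero q] (F : Finset E) :
    (univ.filter (fun σ : V → Fin q => ∀ e ∈ F, σ (G.src e) = σ (G.tgt e))).card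
      = q ^ G.compCount F := by
  haveI : Fintype (G.compRel F).ConnectedComponent := Fintype.ofFinite _
  have hconst : ∀ (σ : V → Fin q), (∀ e ∈ F, σ (G.src e) = σ (G.tgt e)) →
      ∀ v w : V, (G.compRel F).Reachable v w → σ v = σ w := by
    intro σ hσ v w h
    obtain ⟨p⟩ := h
    induction p with
    | nil => rfl
    | cons h p ih =>
      refine Eq.trans ?_ ih
      rw [Multigraph.compRel, SimpleGraph.fromRel_adj] at h
      obtain ⟨-, ⟨e, heF, h1, h2⟩ | ⟨e, heF, h1, h2⟩⟩ := h
      · rw [← h1, ← h2]; exact hσ e heF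
      · rw [← h1, ← h2]; exact (hσ e heF).symm
  have hmk : ∀ (e : E), e ∈ F →
      (G.compRel F).connectedComponentMk (G.src e)
        = (G.compRel F).connectedComponentMk (G.tgt e) := by
    intro e heF
    by_cases hst : G.src e = G.tgt e
    · rw [hst]
    · refine SimpleGraph.ConnectedComponent.sound (SimpleGraph.Adj.reachable ?_)
      rw [Multigraph.compRel, SimpleGraph.fromRel_adj]
      exact ⟨hst, Or.inl ⟨e, heF, rfl, rfl⟩⟩
  have hcard : (univ.filter (fun σ : V → Fin q => ∀ e ∈ F, σ (G.src e) = σ (G.tgt e))).card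
      = (univ : Finset ((G.compRel F).ConnectedComponent → Fin q)).card := by
    refine Finset.card_bij'
      (fun σ hσ => Quot.lift σ (hconst σ (by simpa using hσ)))
      (fun g _ => fun v => g ((G.compRel F).connectedComponentMk v))
      (fun σ hσ => mem_univ _) ?_ ?_ ?_
    · intro g _
      simp only [mem_filter, mem_univ, true_and]
      intro e heF
      rw [hmk e heF]
    · intro σ hσ; rfl
    · intro g hg
      funext c
      refine SimpleGraph.ConnectedComponent.ind (fun v => rfl) c
  rw [hcard, Finset.card_univ, Fintype.card_fun, Fintype.card_fin, Multigraph.compCount,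
    Nat.card_eq_fintype_card]

lemma aux_rc_side (G : Multigraph V E) (q : ℕ) [NeZero q] (y : ℂ) :
    G.ZRC q y = ∑ σ : V → Fin q,
      (1 + y) ^ (univ.filter (fun e => σ (G.src e) = σ (G.tgt e))).card := by
  rw [Multigraph.ZRC]
  have h1 : ∀ F : Finset E, ((q : ℂ)) ^ G.compCount F * y ^ F.card
      = ∑ σ : V → Fin q,
          (if ∀ e ∈ F, σ (G.src e) = σ (G.tgt e) then y ^ F.card else 0) := by
    intro F
    rw [← Finset.sum_filter, Finset.sum_const, nsmul_eq_mul, aux_comp_card, Nat.cast_pow]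
  rw [Finset.sum_congr rfl fun F _ => h1 F, Finset.sum_comm]
  refine Finset.sum_congr rfl fun σ _ => ?_
  have h2 : (univ.filter
      (fun F : Finset E => ∀ e ∈ F, σ (G.src e) = σ (G.tgt e)))
      = (univ.filter (fun e => σ (G.src e) = σ (G.tgt e))).powerset := by
    ext F
    simp [Finset.mem_powerset, Finset.subset_iff]
  have h3 := Finset.prod_add (fun _ : E => y) (fun _ => (1 : ℂ))
    (univ.filter (fun e => σ (G.src e) = σ (G.tgt e)))
  simp only [Finset.prod_const, one_pow, mul_one] at h3
  rw [← Finset.sum_filter, h2, add_comm (1 : ℂ) y, h3]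

end AuxFlowRC

theorem flow_eq_rc {V E : Type} [Fintype V] [Fintype E] [DecidableEq V] [DecidableEq E]
    (G : Multigraph V E) (q : ℕ) [NeZero q] (x : ℂ) (hx : x ≠ 1) :
    (q : ℂ) ^ Fintype.card V * G.Zflow q x =
      (1 - x) ^ Fintype.card E * G.ZRC q ((q : ℂ) * x / (1 - x)) := by
  have h1x : (1 : ℂ) - x ≠ 0 := sub_ne_zero.mpr fun h => hx h.symm
  have key : (1 - x) * (1 + (q : ℂ) * x / (1 - x)) = 1 + ((q : ℂ) - 1) * x := by
    field_simp
    ring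
  rw [aux_flow_side, aux_rc_side, Finset.mul_sum]
  have eqv : Fin q ≃ ZMod q :=
    (finCongr (ZMod.card q).symm).trans (Fintype.equivFin (ZMod q)).symm
  refine (Fintype.sum_equiv (Equiv.arrowCongr (Equiv.refl V) eqv) _ _ fun σ => ?_).symm
  have hfilt : (univ.filter (fun e =>
      (Equiv.arrowCongr (Equiv.refl V) eqv σ) (G.src e)
        = (Equiv.arrowCongr (Equiv.refl V) eqv σ) (G.tgt e)))
      = univ.filter (fun e => σ (G.src e) = σ (G.tgt e)) := by
    refine Finset.filter_congr fun e _ => ?_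
    simp [Equiv.arrowCongr_apply, Function.comp, EmbeddingLike.apply_eq_iff_eq]
  rw [hfilt]
  set m := (univ.filter (fun e => σ (G.src e) = σ (G.tgt e))).card with hm
  have hmle : m ≤ Fintype.card E := by
    rw [hm, ← Finset.card_univ]; exact Finset.card_filter_le _ _
  calc (1 - x) ^ Fintype.card E * (1 + (q : ℂ) * x / (1 - x)) ^ m
      = ((1 - x) * (1 + (q : ℂ) * x / (1 - x))) ^ m * (1 - x) ^ (Fintype.card E - m) := by
        conv_lhs => rw [show Fintype.card E = m + (Fintype.card E - m) from
          (Nat.add_sub_cancel' hmle).symm]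
        rw [pow_add, mul_pow]
        ring
    _ = (1 + ((q : ℂ) - 1) * x) ^ m * (1 - x) ^ (Fintype.card E - m) := by rw [key]
end
end

section
/- Let x ∈ (0,1), ι ≥ 0 an integer, and a_1,...,a_q, b_1,...,b_q integers with Σ_i a_i = Σ_i b_i and Σ_i |a_i - b_i| ≤ 2ι. Then Σ_i min( x^{-a_i}/Σ_j x^{-a_j}, x^{-b_i}/Σ_j x^{-b_j} ) ≥ 1 - (1 - x^ι)/(1 + x^ι). -/
open Finset

noncomputable section

attribute [local instance] Classical.propDecidable

/-!
Write `p i ∝ u i = x ^ (-a i)` and `r i ∝ v i = x ^ (-b i)` and `μ = ∑ min (p i) (r i)`.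
Since `min · max = p r` and `∑ max = 2 - μ`, Cauchy–Schwarz gives
`(∑ √(p i r i))² ≤ μ (2 - μ) = 1 - (1 - μ)²`. Conversely, with `w = √(u v)` and `y = √(u / v)`
we have `u = w y`, `v = w / y`, and `∑ √(p i r i) = ∑ w / √((∑ w y) (∑ w / y))`; the Kantorovich
inequality bounds this below by `2 √K / (1 + K)` as soon as the `y i` vary within a factor `K`.
Here `y i = x ^ (-(a i - b i) / 2)` and `∑ |a i - b i| ≤ 2ι` gives `K = x ^ (-ι)`, whence
`1 - μ ≤ (K - 1) / (K + 1) = (1 - x ^ ι) / (1 + x ^ ι)`.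
-/

theorem kantorovich_inequality {α : Type*} (s : Finset α) {w y : α → ℝ} {m M : ℝ} (hm : 0 < m)
    (hw : ∀ i ∈ s, 0 ≤ w i) (hy : ∀ i ∈ s, m ≤ y i ∧ y i ≤ M) :
    4 * m * M * ((∑ i ∈ s, w i * y i) * ∑ i ∈ s, w i / y i) ≤ (m + M) ^ 2 * (∑ i ∈ s, w i) ^ 2 := by
  set P := ∑ i ∈ s, w i * y i
  set Q := ∑ i ∈ s, w i / y i
  -- `(y - m) (M - y) ≥ 0` divided by `y` gives `y + m M / y ≤ m + M`.
  have hsum : P + m * M * Q ≤ (m + M) * ∑ i ∈ s, w i := by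
    rw [mul_sum, mul_sum, ← sum_add_distrib]
    refine sum_le_sum fun i hi => ?_
    obtain ⟨hmy, hyM⟩ := hy i hi
    have hy0 : 0 < y i := hm.trans_le hmy
    have hpt : y i + m * M / y i ≤ m + M := by
      rw [← sub_nonneg]
      have hfactor : m + M - (y i + m * M / y i) = (y i - m) * (M - y i) / y i := by
        field_simp; ring
      rw [hfactor]
      exact div_nonneg (mul_nonneg (by linarith) (by linarith)) hy0.le
    calc w i * y i + m * M * (w i / y i) = w i * (y i + m * M / y i) := by ring
      _ ≤ w i * (m + M) := mul_le_mul_of_nonneg_left hpt (hw i hi)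
      _ = (m + M) * w i := mul_comm _ _
  have hP : 0 ≤ P := sum_nonneg fun i hi => mul_nonneg (hw i hi) (hm.le.trans (hy i hi).1)
  have hQ : 0 ≤ Q := sum_nonneg fun i hi => div_nonneg (hw i hi) (hm.le.trans (hy i hi).1)
  have hmM : 0 ≤ m * M * Q := by
    obtain rfl | ⟨i, hi⟩ := s.eq_empty_or_nonempty
    · simp [Q]
    · have hM : 0 ≤ M := hm.le.trans ((hy i hi).1.trans (hy i hi).2)
      exact mul_nonneg (mul_nonneg hm.le hM) hQ
  calc 4 * m * M * (P * Q) ≤ (P + m * M * Q) ^ 2 := by nlinarith [sq_nonneg (P - m * M * Q)]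
    _ ≤ ((m + M) * ∑ i ∈ s, w i) ^ 2 := pow_le_pow_left₀ (by positivity) hsum 2
    _ = (m + M) ^ 2 * (∑ i ∈ s, w i) ^ 2 := mul_pow _ _ _

theorem sq_sum_sqrt_mul_le_sum_min_mul_sum_max {α : Type*} (s : Finset α) {f g : α → ℝ}
    (hf : ∀ i ∈ s, 0 ≤ f i) (hg : ∀ i ∈ s, 0 ≤ g i) :
    (∑ i ∈ s, √(f i * g i)) ^ 2 ≤ (∑ i ∈ s, min (f i) (g i)) * ∑ i ∈ s, max (f i) (g i) :=
  sum_sq_le_sum_mul_sum_of_sq_le_mul s (fun i hi => le_min (hf i hi) (hg i hi))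
    (fun i hi => (hf i hi).trans (le_max_left _ _)) fun i hi => by
      rw [min_mul_max, Real.sq_sqrt (mul_nonneg (hf i hi) (hg i hi))]

theorem two_div_one_add_le_sum_min {α : Type*} (s : Finset α) {p r : α → ℝ} {K : ℝ}
    (hp : ∀ i ∈ s, 0 ≤ p i) (hr : ∀ i ∈ s, 0 ≤ r i)
    (hp1 : ∑ i ∈ s, p i = 1) (hr1 : ∑ i ∈ s, r i = 1) (hK : 1 ≤ K)
    (hB : 4 * K ≤ (1 + K) ^ 2 * (∑ i ∈ s, √(p i * r i)) ^ 2) :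
    2 / (1 + K) ≤ ∑ i ∈ s, min (p i) (r i) := by
  set μ := ∑ i ∈ s, min (p i) (r i)
  have hmax : ∑ i ∈ s, max (p i) (r i) = 2 - μ := by
    have htotal : ∑ i ∈ s, (min (p i) (r i) + max (p i) (r i)) = 2 := by
      simp only [min_add_max, sum_add_distrib, hp1, hr1]
      norm_num
    rw [sum_add_distrib] at htotal
    linarith
  have hμ1 : μ ≤ 1 := hp1 ▸ sum_le_sum fun i _ => min_le_left _ _
  have hμ : 4 * K ≤ (1 + K) ^ 2 * (μ * (2 - μ)) := by
    have hCS := sq_sum_sqrt_mul_le_sum_min_mul_sum_max s hp hr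
    rw [hmax] at hCS
    exact hB.trans (mul_le_mul_of_nonneg_left hCS (sq_nonneg _))
  -- `μ (2 - μ) = 1 - (1 - μ)²`, so `hμ` says `(1 + K) (1 - μ) ≤ K - 1`.
  have hgap : ((1 + K) * (1 - μ)) ^ 2 ≤ (K - 1) ^ 2 := by nlinarith
  have hgap' := (sq_le_sq₀ (by nlinarith) (by linarith)).mp hgap
  rw [div_le_iff₀ (by linarith)]
  linarith

theorem four_mul_le_one_add_sq_mul_sq_sum_sqrt_mul {α : Type*} (s : Finset α) {u v : α → ℝ}
    {K : ℝ} (hs : s.Nonempty) (hu : ∀ i ∈ s, 0 < u i) (hv : ∀ i ∈ s, 0 < v i) (hK : 0 ≤ K)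
    (hratio : ∀ i ∈ s, ∀ j ∈ s, u i * v j ≤ K ^ 2 * (u j * v i)) :
    4 * K ≤ (1 + K) ^ 2 *
      (∑ i ∈ s, √(u i / (∑ k ∈ s, u k) * (v i / ∑ k ∈ s, v k))) ^ 2 := by
  set U := ∑ k ∈ s, u k
  set V := ∑ k ∈ s, v k
  have hU : 0 < U := sum_pos hu hs
  have hV : 0 < V := sum_pos hv hs
  set w := fun i => √(u i * v i)
  set y := fun i => √(u i / v i)
  have hwy : ∀ i ∈ s, w i * y i = u i := fun i hi => by
    have hui := hu i hi; have hvi := hv i hi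
    rw [← Real.sqrt_mul (by positivity), show u i * v i * (u i / v i) = u i ^ 2 by field_simp,
      Real.sqrt_sq hui.le]
  have hwdy : ∀ i ∈ s, w i / y i = v i := fun i hi => by
    have hui := hu i hi; have hvi := hv i hi
    rw [← Real.sqrt_div' _ (by positivity), show u i * v i / (u i / v i) = v i ^ 2 by field_simp,
      Real.sqrt_sq hvi.le]
  obtain ⟨j, hj, hjmin⟩ := s.exists_min_image (fun i => u i / v i) hs
  have hyj : 0 < y j := Real.sqrt_pos.mpr (div_pos (hu j hj) (hv j hj))
  have hy : ∀ i ∈ s, y j ≤ y i ∧ y i ≤ K * y j := fun i hi => by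
    refine ⟨Real.sqrt_le_sqrt (hjmin i hi), ?_⟩
    have hle : u i / v i ≤ K ^ 2 * (u j / v j) := by
      rw [mul_div_assoc', div_le_div_iff₀ (hv i hi) (hv j hj)]
      linarith [hratio i hi j hj]
    calc y i ≤ √(K ^ 2 * (u j / v j)) := Real.sqrt_le_sqrt hle
      _ = K * y j := by rw [Real.sqrt_mul (sq_nonneg K), Real.sqrt_sq hK]
  have hkant := kantorovich_inequality s (w := w) hyj (fun i _ => Real.sqrt_nonneg _) hy
  rw [sum_congr rfl hwy, sum_congr rfl hwdy] at hkant
  have hterm : ∀ i ∈ s, √(u i / U * (v i / V)) = w i / √(U * V) := fun i _ => by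
    rw [← Real.sqrt_div' _ (by positivity), div_mul_div_comm]
  rw [sum_congr rfl hterm, ← sum_div, div_pow, Real.sq_sqrt (by positivity), mul_div_assoc',
    le_div_iff₀ (by positivity)]
  refine le_of_mul_le_mul_left ?_ (pow_pos hyj 2)
  linear_combination hkant

theorem two_div_one_add_le_sum_min_div_sum {α : Type*} (s : Finset α) {u v : α → ℝ} {K : ℝ}
    (hs : s.Nonempty) (hu : ∀ i ∈ s, 0 < u i) (hv : ∀ i ∈ s, 0 < v i) (hK : 1 ≤ K)
    (hratio : ∀ i ∈ s, ∀ j ∈ s, u i * v j ≤ K ^ 2 * (u j * v i)) :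
    2 / (1 + K) ≤ ∑ i ∈ s, min (u i / ∑ k ∈ s, u k) (v i / ∑ k ∈ s, v k) :=
  two_div_one_add_le_sum_min s (fun i hi => div_nonneg (hu i hi).le (sum_pos hu hs).le)
    (fun i hi => div_nonneg (hv i hi).le (sum_pos hv hs).le)
    (by rw [← sum_div, div_self (sum_pos hu hs).ne'])
    (by rw [← sum_div, div_self (sum_pos hv hs).ne']) hK
    (four_mul_le_one_add_sq_mul_sq_sum_sqrt_mul s hs hu hv (by linarith) hratio)

theorem sub_le_of_sum_abs_le {α G : Type*} [AddCommGroup G] [LinearOrder G] [IsOrderedAddMonoid G]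
    {s : Finset α} {c : α → G} {D : G} (h : ∑ k ∈ s, |c k| ≤ D) {i j : α} (hi : i ∈ s)
    (hj : j ∈ s) : c i - c j ≤ D := by
  rcases eq_or_ne i j with rfl | hij
  · exact (sub_self (c i)).trans_le ((sum_nonneg fun k _ => abs_nonneg (c k)).trans h)
  · calc c i - c j ≤ |c i| + |c j| :=
          (sub_le_sub (le_abs_self _) (neg_abs_le _)).trans_eq (sub_neg_eq_add _ _)
      _ ≤ ∑ k ∈ s, |c k| := add_le_sum (fun k _ => abs_nonneg (c k)) hi hj hij
      _ ≤ D := h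

theorem sum_of_minima_general (q : ℕ) (hq : 1 ≤ q) (x : ℝ) (hx0 : 0 < x) (hx1 : x < 1)
    (ι : ℕ) (a b : Fin q → ℤ)
    (habs : ∑ i, |a i - b i| ≤ 2 * (ι : ℤ)) :
    1 - (1 - x ^ ι) / (1 + x ^ ι) ≤
      ∑ i, min (x ^ (-(a i)) / ∑ j, x ^ (-(a j)))
               (x ^ (-(b i)) / ∑ j, x ^ (-(b j))) := by
  have hne : (univ : Finset (Fin q)).Nonempty := univ_nonempty_iff.mpr ⟨⟨0, hq⟩⟩
  have hratio : ∀ i ∈ univ, ∀ j ∈ univ, x ^ (-(a i)) * x ^ (-(b j)) ≤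
      ((x ^ ι)⁻¹) ^ 2 * (x ^ (-(a j)) * x ^ (-(b i))) := by
    intro i _ j _
    have hKsq : ((x ^ ι)⁻¹) ^ 2 = x ^ (-(2 * ι : ℤ)) := by
      rw [zpow_neg, mul_comm, zpow_mul, zpow_ofNat, zpow_natCast, inv_pow]
    rw [hKsq, ← zpow_add₀ hx0.ne', ← zpow_add₀ hx0.ne', ← zpow_add₀ hx0.ne']
    refine zpow_le_zpow_right_of_le_one₀ hx0 hx1.le ?_
    linarith [sub_le_of_sum_abs_le (c := fun k => a k - b k) habs (mem_univ i) (mem_univ j)]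
  have hK : 1 ≤ (x ^ ι)⁻¹ := (one_le_inv₀ (pow_pos hx0 ι)).mpr (pow_le_one₀ hx0.le hx1.le)
  have hlhs : 1 - (1 - x ^ ι) / (1 + x ^ ι) = 2 / (1 + (x ^ ι)⁻¹) := by
    have ht : 0 < x ^ ι := pow_pos hx0 ι
    field_simp
    ring
  rw [hlhs]
  exact two_div_one_add_le_sum_min_div_sum univ hne (fun i _ => zpow_pos hx0 _)
    (fun i _ => zpow_pos hx0 _) hK hratio

theorem sum_of_minima (q : ℕ) (hq : 1 ≤ q) (x : ℝ) (hx0 : 0 < x) (hx1 : x < 1)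
    (ι : ℕ) (a b : Fin q → ℤ)
    (hsum : ∑ i, a i = ∑ i, b i)
    (habs : ∑ i, |a i - b i| ≤ 2 * (ι : ℤ)) :
    1 - (1 - x ^ ι) / (1 + x ^ ι) ≤
      ∑ i, min (x ^ (-(a i)) / ∑ j, x ^ (-(a j)))
               (x ^ (-(b i)) / ∑ j, x ^ (-(b j))) :=
  sum_of_minima_general q hq x hx0 hx1 ι a b habs
end
end

section
/- For x ∈ [1/3, 1) and any graph G with non-loop edge e: 1 ≤ Z_flow(G/e; q, x) / Z_flow(G; q, x) ≤ 1/x ≤ 3. -/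
open Finset

noncomputable section

attribute [local instance] Classical.propDecidable

/-!
If `e` is not a loop, restricting to the edges other than `e` is a bijection from the flows of
`G` onto the flows of `G / e`. Conservation in `G / e` is conservation in `G` with the
equations at the two ends of `e` added up, and `e` cancels from that sum. So the only
condition lost is conservation at `tgt e`. Since `e` enters `tgt e` and does not leave it,
that condition fixes the value of the flow on `e` uniquely. Under the bijection the support
loses at most the edge `e`. Hence, for `0 ≤ x ≤ 1`, each term `x ^ |supp f|` of `Z(G)` lies
between `x` times and `1` times the matching term of `Z(G / e)`.
-/

namespace Multigraph

variable {V W E : Type} [DecidableEq V]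

def mapVertices (G : Multigraph V E) (φ : V → W) : Multigraph W E :=
  ⟨φ ∘ G.src, φ ∘ G.tgt⟩

theorem contractEdge_eq_deleteEdge_mapVertices (G : Multigraph V E) (e : E) :
    G.contractEdge e =
      (G.mapVertices fun v => if v = G.tgt e then G.src e else v).deleteEdge e :=
  rfl

variable [Fintype E] [DecidableEq W] {M : Type} [AddCommGroup M]

def excess (G : Multigraph V E) (f : E → M) (v : V) : M :=
  ∑ a ∈ univ.filter (fun a => G.tgt a = v), f a -
    ∑ a ∈ univ.filter (fun a => G.src a = v), f a

theorem isFlow_iff_excess_eq_zero (G : Multigraph V E) {q : ℕ} (f : E → ZMod q) :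
    G.IsFlow q f ↔ ∀ v, G.excess f v = 0 := by
  simp only [IsFlow, excess, sub_eq_zero]

theorem excess_eq_sum (G : Multigraph V E) (f : E → M) (v : V) :
    G.excess f v = ∑ a, ((if G.tgt a = v then f a else 0) - if G.src a = v then f a else 0) := by
  rw [excess, sum_sub_distrib, sum_filter, sum_filter]

theorem excess_sub (G : Multigraph V E) (f g : E → M) (v : V) :
    G.excess (f - g) v = G.excess f v - G.excess g v := by
  simp only [excess, Pi.sub_apply, sum_sub_distrib]
  abel

theorem excess_tgt_of_forall_ne_eq_zero (G : Multigraph V E) {e : E} (he : G.src e ≠ G.tgt e)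
    {f : E → M} (hf : ∀ a ≠ e, f a = 0) : G.excess f (G.tgt e) = f e := by
  rw [excess_eq_sum, Fintype.sum_eq_single e fun a ha => by simp [hf a ha]]
  simp [he]

theorem excess_mapVertices [Fintype V] (G : Multigraph V E) (φ : V → W) (f : E → M) (w : W) :
    (G.mapVertices φ).excess f w = ∑ v ∈ univ.filter (fun v => φ v = w), G.excess f v := by
  simp only [excess_eq_sum]
  rw [sum_comm]
  refine sum_congr rfl fun a _ => ?_
  simp only [mapVertices, Function.comp_apply, sum_sub_distrib, sum_ite_eq, mem_filter, mem_univ,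
    true_and]
  congr

theorem excess_deleteEdge_of_src_eq_tgt [DecidableEq E] (G : Multigraph V E) {e : E}
    (he : G.src e = G.tgt e) (f : E → M) (v : V) :
    (G.deleteEdge e).excess (fun a => f a.1) v = G.excess f v := by
  rw [excess_eq_sum, excess_eq_sum, Fintype.sum_eq_add_sum_subtype_ne _ e, he, sub_self, zero_add]
  rfl

theorem isFlow_iff_isFlow_contractEdge [Fintype V] [DecidableEq E] (G : Multigraph V E) {q : ℕ}
    (e : E) (f : E → ZMod q) :
    G.IsFlow q f ↔ (G.contractEdge e).IsFlow q (fun a => f a.1) ∧ G.excess f (G.tgt e) = 0 := by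
  have hφ : ∀ v ≠ G.tgt e, (fun v => if v = G.tgt e then G.src e else v) v = v :=
    fun v hv => if_neg hv
  have hloop : (G.mapVertices fun v => if v = G.tgt e then G.src e else v).src e =
      (G.mapVertices fun v => if v = G.tgt e then G.src e else v).tgt e := by
    simp [mapVertices]
  rw [contractEdge_eq_deleteEdge_mapVertices]
  generalize (fun v => if v = G.tgt e then G.src e else v) = φ at hφ hloop
  simp only [isFlow_iff_excess_eq_zero, excess_deleteEdge_of_src_eq_tgt _ hloop,
    excess_mapVertices]
  refine ⟨fun h => ⟨fun w => sum_eq_zero fun v _ => h v, h _⟩, fun ⟨h, ht⟩ v => ?_⟩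
  by_cases hv : v = G.tgt e
  · rwa [hv]
  · -- the fibre of `φ` over `v ≠ tgt e` is `v`, together with `tgt e` when `v = src e`
    rw [← h v, sum_eq_single_of_mem v (by simp [hφ v hv])]
    intro u hu huv
    by_cases hut : u = G.tgt e
    · rw [hut, ht]
    · simp [hφ u hut, huv] at hu

theorem eq_of_isFlow_of_forall_ne_eq (G : Multigraph V E) {q : ℕ} {e : E}
    (he : G.src e ≠ G.tgt e) {f g : E → ZMod q} (hf : G.IsFlow q f) (hg : G.IsFlow q g)
    (h : ∀ a ≠ e, f a = g a) : f = g := by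
  rw [isFlow_iff_excess_eq_zero] at hf hg
  have hdiff := G.excess_tgt_of_forall_ne_eq_zero he (f := f - g)
    fun a ha => sub_eq_zero.2 (h a ha)
  rw [excess_sub, hf, hg, sub_zero, eq_comm, Pi.sub_apply, sub_eq_zero] at hdiff
  funext a
  by_cases ha : a = e
  · rw [ha, hdiff]
  · exact h a ha

theorem exists_isFlow_restrict_eq [Fintype V] [DecidableEq E] (G : Multigraph V E) {q : ℕ}
    {e : E} (he : G.src e ≠ G.tgt e) {g : {a // a ≠ e} → ZMod q}
    (hg : (G.contractEdge e).IsFlow q g) :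
    ∃ f : E → ZMod q, G.IsFlow q f ∧ (fun a : {a // a ≠ e} => f a.1) = g := by
  set f₀ : E → ZMod q := fun a => if h : a = e then 0 else g ⟨a, h⟩
  set f : E → ZMod q := f₀ - Pi.single e (G.excess f₀ (G.tgt e))
  have hrestrict : (fun a : {a // a ≠ e} => f a.1) = g := by
    funext a
    simp [f, f₀, a.2]
  refine ⟨f, ?_, hrestrict⟩
  rw [isFlow_iff_isFlow_contractEdge G e, hrestrict, excess_sub,
    G.excess_tgt_of_forall_ne_eq_zero he (f := Pi.single e _) fun a ha => Pi.single_eq_of_ne ha _,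
    Pi.single_eq_same, sub_self]
  exact ⟨hg, rfl⟩

theorem card_flowSupport_eq [DecidableEq E] {q : ℕ} (f : E → ZMod q) (e : E) :
    (flowSupport f).card =
      (flowSupport fun a : {a // a ≠ e} => f a.1).card + if f e = 0 then 0 else 1 := by
  simp only [flowSupport, card_filter, Fintype.sum_eq_add_sum_subtype_ne _ e, ite_not]
  rw [add_comm]

theorem ZflowR_contractEdge_eq_sum [Fintype V] [DecidableEq E] (G : Multigraph V E) (q : ℕ)
    [NeZero q] {e : E} (he : G.src e ≠ G.tgt e) (x : ℝ) :
    (G.contractEdge e).ZflowR q x =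
      ∑ f ∈ univ.filter (fun f : E → ZMod q => G.IsFlow q f),
        x ^ (flowSupport fun a : {a // a ≠ e} => f a.1).card := by
  refine (sum_nbij (fun (f : E → ZMod q) (a : {a // a ≠ e}) => f a.1) (fun f hf => ?_)
    (fun f hf g hg hfg => ?_) (fun g hg => ?_) fun _ _ => rfl).symm
  · exact mem_filter.2
      ⟨mem_univ _, ((isFlow_iff_isFlow_contractEdge G e f).1 (mem_filter.1 hf).2).1⟩
  · exact G.eq_of_isFlow_of_forall_ne_eq he (mem_filter.1 hf).2 (mem_filter.1 hg).2
      fun a ha => congr_fun hfg ⟨a, ha⟩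
  · obtain ⟨f, hf, rfl⟩ := G.exists_isFlow_restrict_eq he (mem_filter.1 hg).2
    exact ⟨f, mem_filter.2 ⟨mem_univ _, hf⟩, rfl⟩

theorem ZflowR_pos [DecidableEq E] (G : Multigraph V E) (q : ℕ) [NeZero q] {x : ℝ}
    (hx : 0 < x) : 0 < G.ZflowR q x :=
  sum_pos (fun _ _ => pow_pos hx _) ⟨0, mem_filter.2 ⟨mem_univ _, fun _ => by simp⟩⟩

section Bounds

variable [Fintype V] [DecidableEq E] (G : Multigraph V E) (q : ℕ) [NeZero q] {e : E} {x : ℝ}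

theorem ZflowR_le_ZflowR_contractEdge (he : G.src e ≠ G.tgt e) (hx0 : 0 ≤ x) (hx1 : x ≤ 1) :
    G.ZflowR q x ≤ (G.contractEdge e).ZflowR q x := by
  rw [ZflowR_contractEdge_eq_sum G q he, ZflowR]
  refine sum_le_sum fun f _ => pow_le_pow_of_le_one hx0 hx1 ?_
  rw [card_flowSupport_eq f e]
  exact Nat.le_add_right _ _

theorem mul_ZflowR_contractEdge_le_ZflowR (he : G.src e ≠ G.tgt e) (hx0 : 0 ≤ x)
    (hx1 : x ≤ 1) :
    x * (G.contractEdge e).ZflowR q x ≤ G.ZflowR q x := by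
  rw [ZflowR_contractEdge_eq_sum G q he, ZflowR, mul_sum]
  refine sum_le_sum fun f _ => ?_
  rw [← pow_succ']
  refine pow_le_pow_of_le_one hx0 hx1 ?_
  rw [card_flowSupport_eq f e]
  split_ifs <;> omega

end Bounds

end Multigraph

theorem contraction_ratio {V E : Type} [Fintype V] [Fintype E] [DecidableEq V] [DecidableEq E]
    (G : Multigraph V E) (q : ℕ) [NeZero q] (x : ℝ) (hx1 : 1/3 ≤ x) (hx2 : x < 1)
    (e : E) (he : G.src e ≠ G.tgt e) :
    1 ≤ (G.contractEdge e).ZflowR q x / G.ZflowR q x ∧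
      (G.contractEdge e).ZflowR q x / G.ZflowR q x ≤ 1 / x ∧ 1 / x ≤ 3 := by
  have hx0 : 0 < x := by linarith
  have hupper := G.ZflowR_le_ZflowR_contractEdge q he hx0.le hx2.le
  have hlower := G.mul_ZflowR_contractEdge_le_ZflowR q he hx0.le hx2.le
  have hZ : 0 < G.ZflowR q x :=
    (mul_pos hx0 ((G.contractEdge e).ZflowR_pos q hx0)).trans_le hlower
  refine ⟨(one_le_div hZ).2 hupper, ?_, ?_⟩
  · rw [div_le_div_iff₀ hZ hx0]
    linarith
  · rw [div_le_iff₀ hx0]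
    linarith
end
end

section
/- Every ℤ_q-flow on a graph G lifts to a ℤ-flow: for each ℤ_q-flow f there exists a ℤ-flow f' on G whose reduction modulo q equals f. -/
open Finset

noncomputable section

attribute [local instance] Classical.propDecidable

/-! Induction on the number of edges. If every edge is a loop, every integer function is a
`ℤ`-flow, so any integer representatives of `f` will do. Otherwise contract an edge `e` from `s`
to `t ≠ s`: the restriction of `f` is a `ℤ_q`-flow on the contraction and lifts by induction to
a `ℤ`-flow `g`. A function on the edges restricting to a flow on the contraction is a flow iff
its value on `e` balances the net inflow at `t`; this forces the value on `e`, and it reduces to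
`f e` since `f` itself balances `t`. -/

namespace Multigraph

variable {V W E : Type}

def map (G : Multigraph V E) (π : V → W) : Multigraph W E :=
  ⟨π ∘ G.src, π ∘ G.tgt⟩

variable [DecidableEq V]

theorem contractEdge_eq_map (G : Multigraph V E) (e : E) :
    G.contractEdge e = (G.deleteEdge e).map (fun v => if v = G.tgt e then G.src e else v) :=
  rfl

variable [Fintype E] [DecidableEq W] {R S : Type*} [AddCommGroup R] [AddCommGroup S]

def netInflow (G : Multigraph V E) (f : E → R) (v : V) : R :=
  ∑ e, ((if G.tgt e = v then f e else 0) - (if G.src e = v then f e else 0))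

theorem isFlow_iff_netInflow {G : Multigraph V E} {q : ℕ} {f : E → ZMod q} :
    G.IsFlow q f ↔ ∀ v, G.netInflow f v = 0 := by
  simp only [IsFlow, netInflow, sum_sub_distrib, ← sum_filter, sub_eq_zero]

theorem isZFlow_iff_netInflow {G : Multigraph V E} {f : E → ℤ} :
    G.IsZFlow f ↔ ∀ v, G.netInflow f v = 0 := by
  simp only [IsZFlow, netInflow, sum_sub_distrib, ← sum_filter, sub_eq_zero]

theorem isZFlow_of_forall_src_eq_tgt {G : Multigraph V E} (h : ∀ e, G.src e = G.tgt e)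
    (f : E → ℤ) : G.IsZFlow f := by
  simp [IsZFlow, h]

theorem map_netInflow (φ : R →+ S) (G : Multigraph V E) (f : E → R) (v : V) :
    G.netInflow (φ ∘ f) v = φ (G.netInflow f v) := by
  simp only [netInflow, map_sum, map_sub, Function.comp_apply, apply_ite φ, map_zero]

theorem netInflow_map (G : Multigraph V E) (f : E → R) {π : V → W} {w : W} {s : Finset V}
    (hs : ∀ v, π v = w ↔ v ∈ s) :
    (G.map π).netInflow f w = ∑ v ∈ s, G.netInflow f v := by
  simp only [netInflow, map, Function.comp_apply, hs]
  rw [sum_comm]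
  simp only [sum_sub_distrib, sum_ite_eq]

theorem netInflow_eq_deleteEdge_add (G : Multigraph V E) (f : E → R) (e : E) (v : V) :
    G.netInflow f v = (G.deleteEdge e).netInflow (fun x => f x) v +
      ((if G.tgt e = v then f e else 0) - (if G.src e = v then f e else 0)) := by
  rw [netInflow, Fintype.sum_eq_add_sum_subtype_ne _ e, add_comm]
  rfl

section contractEdge

variable {G : Multigraph V E} {e : E}

theorem netInflow_contractEdge_tgt (hst : G.src e ≠ G.tgt e) (g : {x // x ≠ e} → R) :
    (G.contractEdge e).netInflow g (G.tgt e) = 0 := by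
  rw [contractEdge_eq_map, netInflow_map (s := ∅), sum_empty]
  intro v
  split_ifs <;> simp_all

theorem netInflow_contractEdge_src (hst : G.src e ≠ G.tgt e) (g : {x // x ≠ e} → R) :
    (G.contractEdge e).netInflow g (G.src e) =
      (G.deleteEdge e).netInflow g (G.src e) + (G.deleteEdge e).netInflow g (G.tgt e) := by
  rw [contractEdge_eq_map, netInflow_map (s := {G.src e, G.tgt e}), sum_pair hst]
  intro v
  split_ifs <;> simp_all

theorem netInflow_contractEdge_of_ne (g : {x // x ≠ e} → R) {v : V} (hs : v ≠ G.src e)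
    (ht : v ≠ G.tgt e) :
    (G.contractEdge e).netInflow g v = (G.deleteEdge e).netInflow g v := by
  rw [contractEdge_eq_map, netInflow_map (s := {v}), sum_singleton]
  intro w
  split_ifs with hw
  · subst hw
    exact iff_of_false (Ne.symm hs) (notMem_singleton.2 (Ne.symm ht))
  · simp

theorem netInflow_eq_zero_iff_contractEdge (hst : G.src e ≠ G.tgt e) {f : E → R} :
    (∀ v, G.netInflow f v = 0) ↔
      (∀ w, (G.contractEdge e).netInflow (fun x => f x) w = 0) ∧
        f e = -(G.deleteEdge e).netInflow (fun x => f x) (G.tgt e) := by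
  simp only [G.netInflow_eq_deleteEdge_add f e]
  constructor
  · intro hf
    have hs := hf (G.src e)
    have ht := hf (G.tgt e)
    simp only [hst, Ne.symm hst, if_true, if_false, zero_sub, sub_zero] at hs ht
    refine ⟨fun w => ?_, eq_neg_of_add_eq_zero_right ht⟩
    by_cases hwt : w = G.tgt e
    · rw [hwt, netInflow_contractEdge_tgt hst]
    by_cases hws : w = G.src e
    · rw [hws, netInflow_contractEdge_src hst, add_neg_eq_zero.1 hs, eq_neg_of_add_eq_zero_left ht,
        add_neg_cancel]
    · rw [netInflow_contractEdge_of_ne _ hws hwt]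
      simpa [Ne.symm hws, Ne.symm hwt] using hf w
  · rintro ⟨hf, he⟩ v
    by_cases hvt : v = G.tgt e
    · simp [hvt, hst, he]
    by_cases hvs : v = G.src e
    · have hsum := hf (G.src e)
      rw [netInflow_contractEdge_src hst] at hsum
      simp [hvs, Ne.symm hst, he, hsum]
    · rw [← netInflow_contractEdge_of_ne _ hvs hvt]
      simp [hf, Ne.symm hvs, Ne.symm hvt]

theorem IsFlow.contractEdge {q : ℕ} {f : E → ZMod q} (hf : G.IsFlow q f)
    (hst : G.src e ≠ G.tgt e) : (G.contractEdge e).IsFlow q (fun x => f x) :=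
  isFlow_iff_netInflow.2
    ((netInflow_eq_zero_iff_contractEdge hst).1 (isFlow_iff_netInflow.1 hf)).1

theorem exists_lift_of_contractEdge (hst : G.src e ≠ G.tgt e) {q : ℕ} {f : E → ZMod q}
    (hf : G.IsFlow q f) {g : {x // x ≠ e} → ℤ} (hg : (G.contractEdge e).IsZFlow g)
    (hgf : ∀ x, (g x : ZMod q) = f x) :
    ∃ f' : E → ℤ, G.IsZFlow f' ∧ ∀ x, (f' x : ZMod q) = f x := by
  rw [isFlow_iff_netInflow, netInflow_eq_zero_iff_contractEdge hst] at hf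
  rw [isZFlow_iff_netInflow] at hg
  set f' := Function.extend Subtype.val g fun _ => -(G.deleteEdge e).netInflow g (G.tgt e)
  have hf'g : (fun x : {x // x ≠ e} => f' x) = g :=
    funext fun x => Subtype.val_injective.extend_apply _ _ x
  have hf'e : f' e = -(G.deleteEdge e).netInflow g (G.tgt e) :=
    Function.extend_apply' _ _ _ (by simp)
  have hf' : G.IsZFlow f' := by
    rw [isZFlow_iff_netInflow, netInflow_eq_zero_iff_contractEdge hst, hf'g]
    exact ⟨hg, hf'e⟩
  refine ⟨f', hf', fun x => ?_⟩
  by_cases hx : x = e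
  · rw [hx, hf'e, hf.2, Int.cast_neg, ← funext hgf]
    exact congrArg Neg.neg (map_netInflow (Int.castAddHom (ZMod q)) _ g _).symm
  · rw [← hgf ⟨x, hx⟩, ← congrFun hf'g ⟨x, hx⟩]

end contractEdge

end Multigraph

theorem flow_lift_general {V E : Type} [Fintype E] [DecidableEq V]
    (G : Multigraph V E) (q : ℕ) (f : E → ZMod q) (hf : G.IsFlow q f) :
    ∃ f' : E → ℤ, G.IsZFlow f' ∧ ∀ e, ((f' e : ZMod q)) = f e := by
  induction hn : Fintype.card E using Nat.strong_induction_on generalizing E with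
  | _ n ih =>
    by_cases hloops : ∀ e, G.src e = G.tgt e
    · exact ⟨fun e => (f e).cast, G.isZFlow_of_forall_src_eq_tgt hloops _,
        fun e => ZMod.intCast_zmod_cast _⟩
    obtain ⟨e, hst⟩ := not_forall.1 hloops
    have hcard : Fintype.card {x // x ≠ e} < n := hn ▸ Fintype.card_subtype_lt (not_not.2 rfl)
    obtain ⟨g, hg, hgf⟩ := ih _ hcard (G.contractEdge e) (fun x => f x) (hf.contractEdge hst) rfl
    exact Multigraph.exists_lift_of_contractEdge hst hf hg hgf

theorem flow_lift {V E : Type} [Fintype V] [Fintype E] [DecidableEq V] [DecidableEq E]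
    (G : Multigraph V E) (q : ℕ) (f : E → ZMod q) (hf : G.IsFlow q f) :
    ∃ f' : E → ℤ, G.IsZFlow f' ∧ ∀ e, ((f' e : ZMod q)) = f e :=
  flow_lift_general G q f hf
end
end
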